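/- arXiv:1005.3036 — 4 statements merged into one kernel-verified Lean document; each statement's English description precedes it below -/
import Mathlib

section
/- For every real η ∈ (0,1) and every real α₂ > -1, the series W(η) = Σ_{k=1}^∞ 2^{-kη} k^{α₂} converges and there exist constants 0 < c ≤ C (depending only on α₂) such that c·η^{-1-α₂} ≤ W(η) ≤ C·η^{-1-α₂}. -/
/-!
With `t = η log 2` the series is `∑_{m ≥ 1} m ^ α * exp (-t m)`, and its terms are of size
`t ^ (-α)` over a range of about `1 / t` indices around `m ≈ 1 / t`.

For the lower bound, each of the `N = ⌈1 / t⌉` terms with `N < m ≤ 2N` is at least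
`exp (-4) * N ^ α / 2`. For the upper bound with `α ≥ 0`, `x ^ α ≤ (2α) ^ α * exp (x / 2)` gives
`m ^ α * exp (-t m) ≤ (2α) ^ α * t ^ (-α) * exp (-t m / 2)`, and the geometric series
`∑ exp (-s m)` is at most `1 / s`. For `-1 < α ≤ 0`, split at `N = ⌊1 / t⌋`: by concavity of
`x ^ (α + 1)` the head is at most `∑_{m ≤ N} m ^ α ≤ N ^ (α + 1) / (α + 1)`, and in the tail
`m ^ α ≤ t ^ (-α)`, so it is at most `t ^ (-α) / t`.
-/

open Real

/-- The term of index `k` of `∑_{m ≥ 1} m ^ α * exp (-t * m)`, with `m = k + 1`. -/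
noncomputable def rpowExpTerm (α t : ℝ) (k : ℕ) : ℝ :=
  exp (-(t * ((k : ℝ) + 1))) * ((k : ℝ) + 1) ^ α

lemma rpowExpTerm_nonneg (α t : ℝ) (k : ℕ) : 0 ≤ rpowExpTerm α t k := by
  unfold rpowExpTerm; positivity

lemma rpow_le_mul_exp {α ε x : ℝ} (hα : 0 ≤ α) (hε : 0 < ε) (hx : 0 ≤ x) :
    x ^ α ≤ (α / ε) ^ α * exp (ε * x) := by
  rcases hα.eq_or_lt with rfl | hα
  · simpa using one_le_exp (by positivity)
  have hlin : x ≤ α / ε * exp (ε * x / α) := by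
    have := add_one_le_exp (ε * x / α)
    calc x = α / ε * (ε * x / α) := by field_simp
      _ ≤ α / ε * exp (ε * x / α) := by gcongr; linarith
  calc x ^ α ≤ (α / ε * exp (ε * x / α)) ^ α := by gcongr
    _ = (α / ε) ^ α * exp (ε * x) := by
      rw [mul_rpow (by positivity) (exp_pos _).le, ← exp_mul, div_mul_cancel₀ _ hα.ne']

lemma hasSum_exp_neg_mul_succ {t : ℝ} (ht : 0 < t) :
    HasSum (fun k : ℕ => exp (-(t * ((k : ℝ) + 1)))) (exp t - 1)⁻¹ := by
  have hr : exp (-t) < 1 := exp_lt_one_iff.mpr (neg_lt_zero.mpr ht)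
  have hterm : (fun k : ℕ => exp (-(t * ((k : ℝ) + 1)))) = fun k => exp (-t) * exp (-t) ^ k := by
    ext k
    rw [← exp_nat_mul, ← exp_add]
    ring_nf
  have hsum : (exp t - 1)⁻¹ = exp (-t) * (1 - exp (-t))⁻¹ := by
    rw [exp_neg]
    have := one_lt_exp_iff.mpr ht
    field_simp
  rw [hterm, hsum]
  exact (hasSum_geometric_of_lt_one (exp_pos _).le hr).mul_left _

lemma tsum_exp_neg_mul_succ_le {t : ℝ} (ht : 0 < t) :
    ∑' k : ℕ, exp (-(t * ((k : ℝ) + 1))) ≤ 1 / t := by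
  rw [(hasSum_exp_neg_mul_succ ht).tsum_eq, one_div]
  have := add_one_le_exp t
  gcongr
  linarith

lemma rpowExpTerm_le_of_nonneg {α t : ℝ} (hα : 0 ≤ α) (ht : 0 < t) (k : ℕ) :
    rpowExpTerm α t k ≤ (2 * α) ^ α * t ^ (-α) * exp (-(t / 2 * ((k : ℝ) + 1))) := by
  set m : ℝ := (k : ℝ) + 1
  have hm : 0 < m := by positivity
  have hsplit : m ^ α = (t * m) ^ α * t ^ (-α) := by
    rw [mul_rpow ht.le hm.le, rpow_neg ht.le]
    field_simp
  have hbound : (t * m) ^ α ≤ (2 * α) ^ α * exp (1 / 2 * (t * m)) := by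
    simpa [div_div_eq_mul_div, mul_comm] using
      rpow_le_mul_exp hα one_half_pos (by positivity : 0 ≤ t * m)
  calc rpowExpTerm α t k = exp (-(t * m)) * (t * m) ^ α * t ^ (-α) := by
        rw [rpowExpTerm, hsplit, mul_assoc]
    _ ≤ exp (-(t * m)) * ((2 * α) ^ α * exp (1 / 2 * (t * m))) * t ^ (-α) := by gcongr
    _ = (2 * α) ^ α * t ^ (-α) * exp (-(t / 2 * m)) := by
        rw [mul_left_comm, mul_assoc, ← exp_add]
        ring_nf

lemma rpowExpTerm_le_exp_of_nonpos {α : ℝ} (hα : α ≤ 0) (t : ℝ) (k : ℕ) :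
    rpowExpTerm α t k ≤ exp (-(t * ((k : ℝ) + 1))) :=
  mul_le_of_le_one_right (exp_pos _).le (rpow_le_one_of_one_le_of_nonpos (by simp) hα)

lemma summable_rpowExpTerm (α : ℝ) {t : ℝ} (ht : 0 < t) : Summable (rpowExpTerm α t) := by
  rcases le_total 0 α with hα | hα
  · exact .of_nonneg_of_le (rpowExpTerm_nonneg α t) (rpowExpTerm_le_of_nonneg hα ht)
      ((hasSum_exp_neg_mul_succ (half_pos ht)).summable.mul_left _)
  · exact .of_nonneg_of_le (rpowExpTerm_nonneg α t) (rpowExpTerm_le_exp_of_nonpos hα t)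
      (hasSum_exp_neg_mul_succ ht).summable

lemma rpow_neg_one_sub {t : ℝ} (ht : 0 < t) (α : ℝ) : t ^ (-1 - α) = t ^ (-α) / t := by
  rw [sub_eq_neg_add, rpow_add ht, rpow_neg_one, div_eq_mul_inv, mul_comm]

lemma inv_rpow_add_one {t : ℝ} (ht : 0 ≤ t) (α : ℝ) : t⁻¹ ^ (α + 1) = t ^ (-1 - α) := by
  rw [inv_rpow ht, ← rpow_neg ht]
  ring_nf

lemma tsum_rpowExpTerm_le_of_nonneg {α t : ℝ} (hα : 0 ≤ α) (ht : 0 < t) :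
    ∑' k, rpowExpTerm α t k ≤ 2 * (2 * α) ^ α * t ^ (-1 - α) := by
  have hgeom := hasSum_exp_neg_mul_succ (half_pos ht)
  calc ∑' k, rpowExpTerm α t k
      ≤ ∑' k : ℕ, (2 * α) ^ α * t ^ (-α) * exp (-(t / 2 * ((k : ℝ) + 1))) :=
        (summable_rpowExpTerm α ht).tsum_le_tsum (rpowExpTerm_le_of_nonneg hα ht)
          (hgeom.summable.mul_left _)
    _ ≤ (2 * α) ^ α * t ^ (-α) * (1 / (t / 2)) := by
        rw [tsum_mul_left]
        gcongr
        exact tsum_exp_neg_mul_succ_le (half_pos ht)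
    _ = 2 * (2 * α) ^ α * t ^ (-1 - α) := by
        rw [rpow_neg_one_sub ht]
        field_simp

lemma mul_rpow_sub_one_le_rpow_add_one_sub_rpow {β x : ℝ} (hβ₀ : 0 ≤ β) (hβ₁ : β ≤ 1)
    (hx : 0 ≤ x) : β * (x + 1) ^ (β - 1) ≤ (x + 1) ^ β - x ^ β := by
  have hx1 : 0 < x + 1 := by linarith
  have hinv : (x + 1)⁻¹ ≤ 1 := inv_le_one_of_one_le₀ (by linarith)
  have hbern : (1 + -(x + 1)⁻¹) ^ β ≤ 1 + β * -(x + 1)⁻¹ :=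
    rpow_one_add_le_one_add_mul_self (by linarith) hβ₀ hβ₁
  have : x ^ β ≤ (x + 1) ^ β - β * (x + 1) ^ (β - 1) :=
    calc x ^ β = ((x + 1) * (1 + -(x + 1)⁻¹)) ^ β := by congr 1; field_simp; ring
      _ = (x + 1) ^ β * (1 + -(x + 1)⁻¹) ^ β := mul_rpow hx1.le (by linarith)
      _ ≤ (x + 1) ^ β * (1 + β * -(x + 1)⁻¹) := by gcongr
      _ = (x + 1) ^ β - β * (x + 1) ^ (β - 1) := by rw [rpow_sub_one hx1.ne']; ring
  linarith

lemma sum_range_rpow_succ_le {α : ℝ} (hα₀ : -1 < α) (hα₁ : α ≤ 0) (N : ℕ) :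
    ∑ k ∈ Finset.range N, ((k : ℝ) + 1) ^ α ≤ (N : ℝ) ^ (α + 1) / (α + 1) := by
  have hβ : 0 < α + 1 := by linarith
  have hstep (k : ℕ) :
      ((k : ℝ) + 1) ^ α ≤ (((k + 1 : ℕ) : ℝ) ^ (α + 1) - (k : ℝ) ^ (α + 1)) / (α + 1) := by
    rw [le_div_iff₀ hβ, mul_comm, Nat.cast_succ]
    simpa only [add_sub_cancel_right] using
      mul_rpow_sub_one_le_rpow_add_one_sub_rpow hβ.le (by linarith) k.cast_nonneg
  calc _ ≤ ∑ k ∈ Finset.range N, (((k + 1 : ℕ) : ℝ) ^ (α + 1) - (k : ℝ) ^ (α + 1)) / (α + 1) :=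
        Finset.sum_le_sum fun k _ => hstep k
    _ = (N : ℝ) ^ (α + 1) / (α + 1) := by
        rw [← Finset.sum_div, Finset.sum_range_sub (fun k : ℕ => (k : ℝ) ^ (α + 1))]
        simp [zero_rpow hβ.ne']

lemma rpowExpTerm_le_rpow (α : ℝ) {t : ℝ} (ht : 0 ≤ t) (k : ℕ) :
    rpowExpTerm α t k ≤ ((k : ℝ) + 1) ^ α :=
  mul_le_of_le_one_left (by positivity) (exp_le_one_iff.mpr (neg_nonpos.mpr (by positivity)))

lemma rpowExpTerm_add_le {α t : ℝ} (hα : α ≤ 0) (ht : 0 < t) {N : ℕ} (hN : t⁻¹ ≤ N + 1)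
    (k : ℕ) : rpowExpTerm α t (k + N) ≤ t ^ (-α) * exp (-(t * ((k : ℝ) + 1))) := by
  have hpow : ((k + N : ℕ) + 1 : ℝ) ^ α ≤ t ^ (-α) := by
    rw [rpow_neg ht.le, ← inv_rpow ht.le]
    refine rpow_le_rpow_of_nonpos (by positivity) ?_ hα
    push_cast
    linarith [k.cast_nonneg (α := ℝ)]
  have hexp : exp (-(t * ((k + N : ℕ) + 1 : ℝ))) ≤ exp (-(t * ((k : ℝ) + 1))) := by
    gcongr
    linarith [N.cast_nonneg (α := ℝ)]
  rw [rpowExpTerm, mul_comm (t ^ (-α))]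
  exact mul_le_mul hexp hpow (by positivity) (exp_pos _).le

lemma tsum_rpowExpTerm_le_of_nonpos {α t : ℝ} (hα₀ : -1 < α) (hα₁ : α ≤ 0) (ht : 0 < t) :
    ∑' k, rpowExpTerm α t k ≤ (1 / (α + 1) + 1) * t ^ (-1 - α) := by
  set N := ⌊t⁻¹⌋₊
  have hNle : (N : ℝ) ≤ t⁻¹ := Nat.floor_le (by positivity)
  have hNlt : t⁻¹ ≤ N + 1 := (Nat.lt_floor_add_one _).le
  have hhead : ∑ k ∈ Finset.range N, rpowExpTerm α t k ≤ t ^ (-1 - α) / (α + 1) :=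
    calc ∑ k ∈ Finset.range N, rpowExpTerm α t k
        ≤ ∑ k ∈ Finset.range N, ((k : ℝ) + 1) ^ α :=
          Finset.sum_le_sum fun k _ => rpowExpTerm_le_rpow α ht.le k
      _ ≤ (N : ℝ) ^ (α + 1) / (α + 1) := sum_range_rpow_succ_le hα₀ hα₁ N
      _ ≤ t ^ (-1 - α) / (α + 1) := by
          rw [← inv_rpow_add_one ht.le]
          gcongr <;> linarith
  have htail : ∑' k, rpowExpTerm α t (k + N) ≤ t ^ (-1 - α) :=
    calc ∑' k, rpowExpTerm α t (k + N) ≤ ∑' k : ℕ, t ^ (-α) * exp (-(t * ((k : ℝ) + 1))) :=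
          ((summable_nat_add_iff N).mpr (summable_rpowExpTerm α ht)).tsum_le_tsum
            (rpowExpTerm_add_le hα₁ ht hNlt) ((hasSum_exp_neg_mul_succ ht).summable.mul_left _)
      _ ≤ t ^ (-α) * (1 / t) := by
          rw [tsum_mul_left]
          gcongr
          exact tsum_exp_neg_mul_succ_le ht
      _ = t ^ (-1 - α) := by rw [rpow_neg_one_sub ht]; ring
  rw [← (summable_rpowExpTerm α ht).sum_add_tsum_nat_add N]
  calc _ ≤ t ^ (-1 - α) / (α + 1) + t ^ (-1 - α) := add_le_add hhead htail
    _ = (1 / (α + 1) + 1) * t ^ (-1 - α) := by ring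

lemma rpow_div_two_le_rpow {α a x : ℝ} (hα : -1 < α) (ha : 0 < a) (hax : a ≤ x)
    (hx : x ≤ 2 * a) : a ^ α / 2 ≤ x ^ α := by
  rcases le_total 0 α with hα₀ | hα₀
  · have := rpow_le_rpow ha.le hax hα₀
    linarith [rpow_nonneg ha.le α]
  · have htwo : 2⁻¹ ≤ (2 : ℝ) ^ α := by
      rw [← rpow_neg_one]; exact rpow_le_rpow_of_exponent_le one_le_two hα.le
    calc a ^ α / 2 ≤ 2 ^ α * a ^ α := by
          rw [div_eq_mul_inv, mul_comm]; gcongr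
      _ = (2 * a) ^ α := (mul_rpow zero_le_two ha.le).symm
      _ ≤ x ^ α := rpow_le_rpow_of_nonpos (by linarith) hx hα₀

lemma le_tsum_rpowExpTerm {α t : ℝ} (hα : -1 < α) (ht₀ : 0 < t) (ht₁ : t ≤ 1) :
    exp (-4) / 2 * t ^ (-1 - α) ≤ ∑' k, rpowExpTerm α t k := by
  set N := ⌈t⁻¹⌉₊
  have hNge : t⁻¹ ≤ N := Nat.le_ceil _
  have hNlt : (N : ℝ) < t⁻¹ + 1 := Nat.ceil_lt_add_one (by positivity)
  have hN : 0 < (N : ℝ) := lt_of_lt_of_le (by positivity) hNge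
  have hterm : ∀ k ∈ Finset.Ico N (2 * N), exp (-4) / 2 * (N : ℝ) ^ α ≤ rpowExpTerm α t k := by
    intro k hk
    rw [Finset.mem_Ico] at hk
    have hk₁ : (N : ℝ) ≤ k + 1 := by exact_mod_cast hk.1.trans k.le_succ
    have hk₂ : (k : ℝ) + 1 ≤ 2 * N := by exact_mod_cast hk.2
    have hexp : exp (-4) ≤ exp (-(t * ((k : ℝ) + 1))) := by
      gcongr
      have : t * t⁻¹ = 1 := mul_inv_cancel₀ ht₀.ne'
      nlinarith
    rw [rpowExpTerm, div_mul_eq_mul_div, mul_div_assoc]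
    exact mul_le_mul hexp (rpow_div_two_le_rpow hα hN hk₁ hk₂) (by positivity) (exp_pos _).le
  have hcard : (Finset.Ico N (2 * N)).card = N := by rw [Nat.card_Ico]; omega
  calc exp (-4) / 2 * t ^ (-1 - α) ≤ exp (-4) / 2 * (N : ℝ) ^ (α + 1) := by
        rw [← inv_rpow_add_one ht₀.le]
        gcongr
        linarith
    _ = N * (exp (-4) / 2 * (N : ℝ) ^ α) := by rw [rpow_add_one hN.ne']; ring
    _ ≤ ∑ k ∈ Finset.Ico N (2 * N), rpowExpTerm α t k := by
        simpa [hcard] using Finset.card_nsmul_le_sum _ _ _ hterm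
    _ ≤ ∑' k, rpowExpTerm α t k :=
        (summable_rpowExpTerm α ht₀).sum_le_tsum _ fun k _ => rpowExpTerm_nonneg α t k

lemma exists_tsum_rpowExpTerm_le {α : ℝ} (hα : -1 < α) :
    ∃ C, ∀ t, 0 < t → ∑' k, rpowExpTerm α t k ≤ C * t ^ (-1 - α) := by
  rcases le_total 0 α with hα₀ | hα₀
  · exact ⟨_, fun t ht => tsum_rpowExpTerm_le_of_nonneg hα₀ ht⟩
  · exact ⟨_, fun t ht => tsum_rpowExpTerm_le_of_nonpos hα hα₀ ht⟩

lemma two_rpow_neg_mul_mul_rpow_eq_rpowExpTerm (α η : ℝ) (k : ℕ) :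
    (2 : ℝ) ^ (-((k : ℝ) + 1) * η) * ((k : ℝ) + 1) ^ α = rpowExpTerm α (log 2 * η) k := by
  rw [rpowExpTerm, rpow_def_of_pos two_pos]
  ring_nf

/-- For every `α₂ > -1`, the series `W(η) = Σ_{k≥1} 2^{-kη} k^{α₂}` converges for every
`η ∈ (0,1)`, and there are constants `0 < c ≤ C` depending only on `α₂` with
`c·η^{-1-α₂} ≤ W(η) ≤ C·η^{-1-α₂}`. -/
theorem series_asymptotics_alpha_gt_neg_one (α₂ : ℝ) (hα₂ : -1 < α₂) :
    (∀ η ∈ Set.Ioo (0:ℝ) 1,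
      Summable (fun k : ℕ => (2:ℝ) ^ (-((k:ℝ)+1) * η) * ((k:ℝ)+1) ^ α₂)) ∧
    ∃ c C : ℝ, 0 < c ∧ c ≤ C ∧ ∀ η ∈ Set.Ioo (0:ℝ) 1,
      c * η ^ (-1 - α₂) ≤ (∑' k : ℕ, (2:ℝ) ^ (-((k:ℝ)+1) * η) * ((k:ℝ)+1) ^ α₂) ∧
      (∑' k : ℕ, (2:ℝ) ^ (-((k:ℝ)+1) * η) * ((k:ℝ)+1) ^ α₂) ≤ C * η ^ (-1 - α₂) := by
  have hterm (η : ℝ) := funext (two_rpow_neg_mul_mul_rpow_eq_rpowExpTerm α₂ η)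
  have hlog : 0 < log 2 := log_pos one_lt_two
  have hrate {η : ℝ} (hη : η ∈ Set.Ioo (0 : ℝ) 1) : 0 < log 2 * η ∧ log 2 * η ≤ 1 :=
    ⟨by nlinarith [hη.1], by nlinarith [hη.2, log_two_lt_d9]⟩
  have hscale {η : ℝ} (hη : η ∈ Set.Ioo (0 : ℝ) 1) :
      (log 2 * η) ^ (-1 - α₂) = log 2 ^ (-1 - α₂) * η ^ (-1 - α₂) :=
    mul_rpow hlog.le hη.1.le
  obtain ⟨C, hC⟩ := exists_tsum_rpowExpTerm_le hα₂
  set c := exp (-4) / 2 * log 2 ^ (-1 - α₂)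
  refine ⟨fun η hη => hterm η ▸ summable_rpowExpTerm α₂ (hrate hη).1, c,
    max (C * log 2 ^ (-1 - α₂)) c, by positivity, le_max_right _ _, fun η hη => ⟨?_, ?_⟩⟩
  · calc c * η ^ (-1 - α₂) = exp (-4) / 2 * (log 2 * η) ^ (-1 - α₂) := by rw [hscale hη]; ring
      _ ≤ _ := hterm η ▸ le_tsum_rpowExpTerm hα₂ (hrate hη).1 (hrate hη).2
  · calc _ ≤ C * (log 2 * η) ^ (-1 - α₂) := hterm η ▸ hC _ (hrate hη).1
      _ = C * log 2 ^ (-1 - α₂) * η ^ (-1 - α₂) := by rw [hscale hη]; ring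
      _ ≤ max (C * log 2 ^ (-1 - α₂)) c * η ^ (-1 - α₂) :=
          mul_le_mul_of_nonneg_right (le_max_left _ _) (rpow_nonneg hη.1.le _)
end

section
/- Let Δ ∈ (0,1), γ > 1, q₀ = 1/Δ, and f₀(x) = x^{-Δ}|log x|^γ on (0,1). Then there exist constants 0 < c ≤ C (depending on Δ, γ) such that for all p in a left neighborhood of q₀ (say p ∈ (q₀/2, q₀)): c·(q₀ - p)^{-γ - 1/p} ≤ ‖f₀‖_{L^p((0,1))} ≤ C·(q₀ - p)^{-γ - 1/p}. -/
/-!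
Substituting `x = exp (-t)` turns `∫₀¹ x^{-a} (-log x)^b dx` into the Gamma integral
`∫₀^∞ t^b e^{-(1-a)t} dt = Γ(b+1) / (1-a)^{b+1}`. With `a = Δp`, `b = γp` and `1 - Δp = Δ(q₀ - p)`
this gives `‖f₀‖_p = Γ(γp+1)^{1/p} Δ^{-γ-1/p} (q₀ - p)^{-γ-1/p}` exactly, and the prefactor is a
continuous positive function of `p` on the compact interval `[q₀/2, q₀]`, hence bounded above and
away from zero there.
-/

open MeasureTheory Real Set

theorem image_exp_neg_Ioi_zero : (fun t : ℝ => exp (-t)) '' Ioi 0 = Ioo 0 1 := by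
  ext x
  constructor
  · rintro ⟨t, ht, rfl⟩
    exact ⟨exp_pos _, exp_lt_one_iff.2 (neg_lt_zero.2 ht)⟩
  · rintro ⟨hx0, hx1⟩
    exact ⟨-log x, neg_pos.2 (log_neg hx0 hx1), by simp [exp_log hx0]⟩

theorem integral_Ioo_zero_one_rpow_neg_mul_neg_log_rpow {a b : ℝ} (ha : a < 1) (hb : -1 < b) :
    ∫ x in Ioo (0:ℝ) 1, x ^ (-a) * (-log x) ^ b = (1 / (1 - a)) ^ (b + 1) * Gamma (b + 1) := by
  have hderiv : ∀ t ∈ Ioi (0:ℝ),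
      HasDerivWithinAt (fun t : ℝ => exp (-t)) (-exp (-t)) (Ioi 0) t := fun t _ => by
    simpa using ((hasDerivAt_neg t).exp).hasDerivWithinAt
  have hinj : InjOn (fun t : ℝ => exp (-t)) (Ioi 0) := fun s _ t _ hst => by
    simpa using exp_injective hst
  rw [← image_exp_neg_Ioi_zero,
    integral_image_eq_integral_abs_deriv_smul measurableSet_Ioi hderiv hinj]
  have hintegrand : ∀ t ∈ Ioi (0:ℝ), |-exp (-t)| • ((exp (-t)) ^ (-a) * (-log (exp (-t))) ^ b)
      = t ^ (b + 1 - 1) * exp (-((1 - a) * t)) := fun t _ => by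
    rw [abs_neg, abs_of_pos (exp_pos _), smul_eq_mul, log_exp, neg_neg, ← exp_mul,
      add_sub_cancel_right, ← mul_assoc, ← exp_add, mul_comm]
    ring_nf
  rw [setIntegral_congr_fun measurableSet_Ioi hintegrand]
  exact integral_rpow_mul_exp_neg_mul_Ioi (by linarith) (by linarith)

theorem integral_Ioo_zero_one_rpow_neg_mul_neg_log_rpow_rpow {Δ γ p : ℝ} (hΔp : Δ * p < 1)
    (hγp : -1 < γ * p) :
    ∫ x in Ioo (0:ℝ) 1, (x ^ (-Δ) * (-log x) ^ γ) ^ p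
      = (1 / (1 - Δ * p)) ^ (γ * p + 1) * Gamma (γ * p + 1) := by
  have hintegrand : ∀ x ∈ Ioo (0:ℝ) 1,
      (x ^ (-Δ) * (-log x) ^ γ) ^ p = x ^ (-(Δ * p)) * (-log x) ^ (γ * p) := fun x ⟨hx0, hx1⟩ => by
    have hlog : 0 ≤ -log x := neg_nonneg.2 (log_nonpos hx0.le hx1.le)
    rw [mul_rpow (rpow_nonneg hx0.le _) (rpow_nonneg hlog _), ← rpow_mul hx0.le,
      ← rpow_mul hlog, neg_mul]
  rw [setIntegral_congr_fun measurableSet_Ioo hintegrand]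
  exact integral_Ioo_zero_one_rpow_neg_mul_neg_log_rpow hΔp hγp

noncomputable def lpNormPrefactor (Δ γ p : ℝ) : ℝ :=
  Gamma (γ * p + 1) ^ (1 / p) * Δ ^ (-γ - 1 / p)

theorem integral_Ioo_zero_one_rpow_neg_mul_neg_log_rpow_rpow_one_div {Δ γ p : ℝ} (hΔ : 0 < Δ)
    (hp : p ∈ Ioo 0 (1 / Δ)) (hγp : -1 < γ * p) :
    (∫ x in Ioo (0:ℝ) 1, (x ^ (-Δ) * (-log x) ^ γ) ^ p) ^ (1 / p)
      = lpNormPrefactor Δ γ p * (1 / Δ - p) ^ (-γ - 1 / p) := by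
  obtain ⟨hp0, hpq⟩ := hp
  have hgap : 0 < 1 / Δ - p := sub_pos.2 hpq
  have hΔgap : 1 - Δ * p = Δ * (1 / Δ - p) := by field_simp
  have hΔp : Δ * p < 1 := by nlinarith
  have hΓ : 0 < Gamma (γ * p + 1) := Gamma_pos_of_pos (by linarith)
  rw [integral_Ioo_zero_one_rpow_neg_mul_neg_log_rpow_rpow hΔp hγp, hΔgap,
    mul_rpow (by positivity) hΓ.le, ← rpow_mul (by positivity),
    show (γ * p + 1) * (1 / p) = γ + 1 / p by field_simp, one_div, inv_rpow (by positivity),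
    ← rpow_neg (by positivity), mul_rpow hΔ.le hgap.le, lpNormPrefactor, neg_add']
  ring

theorem lpNormPrefactor_pos {Δ γ p : ℝ} (hΔ : 0 < Δ) (hγp : -1 < γ * p) :
    0 < lpNormPrefactor Δ γ p :=
  mul_pos (rpow_pos_of_pos (Gamma_pos_of_pos (by linarith)) _) (rpow_pos_of_pos hΔ _)

theorem continuousOn_lpNormPrefactor {Δ γ : ℝ} (hΔ : 0 < Δ) (hγ : 0 ≤ γ) :
    ContinuousOn (lpNormPrefactor Δ γ) (Ioi 0) := fun p (hp : 0 < p) => by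
  have hΓ : 0 < Gamma (γ * p + 1) := Gamma_pos_of_pos (by positivity)
  have hΓcont : ContinuousAt (fun p => Gamma (γ * p + 1)) p :=
    (differentiableAt_Gamma fun m h => by
      linarith [Nat.cast_nonneg (α := ℝ) m, mul_nonneg hγ hp.le]).continuousAt.comp
      (by fun_prop)
  have hinv : ContinuousAt (fun p : ℝ => 1 / p) p := continuousAt_const.div continuousAt_id hp.ne'
  exact ((hΓcont.rpow hinv (Or.inl hΓ.ne')).mul
    (continuousAt_const.rpow (continuousAt_const.sub hinv) (Or.inl hΔ.ne'))).continuousWithinAt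

theorem IsCompact.exists_pos_bounds_of_continuousOn {α : Type*} [TopologicalSpace α] {K : Set α}
    {f : α → ℝ} (hK : IsCompact K) (hne : K.Nonempty) (hf : ContinuousOn f K)
    (hpos : ∀ x ∈ K, 0 < f x) : ∃ c C : ℝ, 0 < c ∧ c ≤ C ∧ ∀ x ∈ K, c ≤ f x ∧ f x ≤ C := by
  obtain ⟨xmin, hxmin, hmin⟩ := hK.exists_isMinOn hne hf
  obtain ⟨xmax, hxmax, hmax⟩ := hK.exists_isMaxOn hne hf
  exact ⟨f xmin, f xmax, hpos xmin hxmin, hmin hxmax, fun x hx => ⟨hmin hx, hmax hx⟩⟩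

/-- For `Δ ∈ (0,1)`, `γ > 1`, `q₀ = 1/Δ` and `f₀(x) = x^{-Δ}(-log x)^γ` on `(0,1)`,
the `L^p` norm of `f₀` is comparable to `(q₀ - p)^{-γ-1/p}` for `p ∈ (q₀/2, q₀)`. -/
theorem f0_Lp_norm_asymptotics (Δ γ : ℝ) (hΔ : Δ ∈ Ioo (0:ℝ) 1) (hγ : 1 < γ) :
    ∃ c C : ℝ, 0 < c ∧ c ≤ C ∧
      ∀ p ∈ Ioo (1/Δ/2) (1/Δ),
        c * (1/Δ - p) ^ (-γ - 1/p)
            ≤ (∫ x in Ioo (0:ℝ) 1, (x ^ (-Δ) * (-Real.log x) ^ γ) ^ p) ^ (1/p) ∧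
        (∫ x in Ioo (0:ℝ) 1, (x ^ (-Δ) * (-Real.log x) ^ γ) ^ p) ^ (1/p)
            ≤ C * (1/Δ - p) ^ (-γ - 1/p) := by
  have hΔ0 : 0 < Δ := hΔ.1
  have hq₀ : 0 < 1 / Δ := by positivity
  have hγp : ∀ p ∈ Icc (1 / Δ / 2) (1 / Δ), -1 < γ * p := fun p hp => by
    nlinarith [hp.1]
  obtain ⟨c, C, hc, hcC, hbounds⟩ := isCompact_Icc.exists_pos_bounds_of_continuousOn
    (nonempty_Icc.2 (by linarith))
    ((continuousOn_lpNormPrefactor hΔ0 (by linarith)).mono fun p hp => by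
      simp only [mem_Ioi]; linarith [hp.1])
    fun p hp => lpNormPrefactor_pos hΔ0 (hγp p hp)
  refine ⟨c, C, hc, hcC, fun p hp => ?_⟩
  have hpIcc : p ∈ Icc (1 / Δ / 2) (1 / Δ) := Ioo_subset_Icc_self hp
  have hgap : 0 ≤ (1 / Δ - p) ^ (-γ - 1 / p) := rpow_nonneg (by linarith [hp.2]) _
  rw [integral_Ioo_zero_one_rpow_neg_mul_neg_log_rpow_rpow_one_div hΔ0
    ⟨by linarith [hp.1], hp.2⟩ (hγp p hpIcc)]
  exact ⟨mul_le_mul_of_nonneg_right (hbounds p hpIcc).1 hgap,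
    mul_le_mul_of_nonneg_right (hbounds p hpIcc).2 hgap⟩
end

section
/- Let 1 < b < ∞, β ≥ 0, α₂ > -1, α ∈ (0, 1/b), and b₁ = b/(1 - αb). Then there exist constants 0 < c ≤ C such that for all q ∈ (max(1, b₁/2), b₁): c·(b₁ - q)^{-β - α₂ - 1} ≤ inf_{p ∈ (1,b)} (b-p)^{-β} / [α - (1/p - 1/q)]^{α₂+1} ≤ C·(b₁ - q)^{-β - α₂ - 1}, where the infimum is taken over those p ∈ (1,b) with 1/p - 1/q < α. -/
open Real Set

set_option maxHeartbeats 2000000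

/-- For `1 < b < ∞`, `β ≥ 0`, `α₂ > -1`, `α ∈ (0,1/b)` and `b₁ = b/(1-αb)`, the infimum
over `p ∈ (1,b)` with `1/p - 1/q < α` of `(b-p)^{-β}·(α-(1/p-1/q))^{-(α₂+1)}` is
comparable to `(b₁-q)^{-β-α₂-1}` for `q` in a left neighborhood of `b₁`. -/
theorem inf_weight_asymptotics (b β α₂ α : ℝ) (hb : 1 < b) (hβ : 0 ≤ β)
    (hα₂ : -1 < α₂) (hα : α ∈ Ioo 0 (1/b)) :
    ∃ c C : ℝ, 0 < c ∧ c ≤ C ∧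
      ∀ q ∈ Ioo (max 1 (b / (1 - α * b) / 2)) (b / (1 - α * b)),
        c * (b / (1 - α * b) - q) ^ (-β - α₂ - 1)
            ≤ sInf {r : ℝ | ∃ p ∈ Ioo 1 b, 1/p - 1/q < α ∧
                r = (b - p) ^ (-β) / (α - (1/p - 1/q)) ^ (α₂ + 1)} ∧
        sInf {r : ℝ | ∃ p ∈ Ioo 1 b, 1/p - 1/q < α ∧
                r = (b - p) ^ (-β) / (α - (1/p - 1/q)) ^ (α₂ + 1)}
            ≤ C * (b / (1 - α * b) - q) ^ (-β - α₂ - 1) := by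
  obtain ⟨hα0, hαb⟩ := hα
  have hb0 : (0:ℝ) < b := lt_trans one_pos hb
  have h1ab : 0 < 1 - α * b := by
    have := (lt_div_iff₀ hb0).mp hαb
    linarith
  set b1 := b / (1 - α * b) with hb1def
  have hb1pos : 0 < b1 := div_pos hb0 h1ab
  have hbb1 : b < b1 := by
    rw [hb1def, lt_div_iff₀ h1ab]
    nlinarith [mul_pos (mul_pos hα0 hb0) hb0]
  have hb1inv : 1 / b1 = 1 / b - α := by
    rw [hb1def]
    field_simp
  clear_value b1
  set e : ℝ := -β - α₂ - 1 with he
  have he0 : e < 0 := by rw [he]; linarith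
  have heeq : e = -β - (α₂ + 1) := by rw [he]; ring
  clear_value e
  set θ : ℝ := (b - 1) / (2 * b) with hθdef
  have hθ0 : 0 < θ := div_pos (by linarith) (by linarith)
  have hθhalf : θ < 1 := by
    rw [hθdef, div_lt_one (by linarith)]; linarith
  have h1θ : 0 < 1 - θ := by linarith
  have hθb : 1 / b + θ < 1 := by
    have h2 : 1 / b + θ = 1 - (b - 1) / (2 * b) := by
      rw [hθdef]; field_simp; ring
    have h3 : 0 < (b - 1) / (2 * b) := div_pos (by linarith) (by linarith)
    linarith
  clear_value θ
  set cl : ℝ := (b * b) ^ (-β) * (2 / (b1 * b1)) ^ e with hcl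
  set Cu : ℝ := θ ^ (-β) * (1 - θ) ^ (-(α₂ + 1)) * (1 / (b1 * b1)) ^ e with hCu
  have hclpos : 0 < cl :=
    mul_pos (Real.rpow_pos_of_pos (mul_pos hb0 hb0) _)
      (Real.rpow_pos_of_pos (div_pos two_pos (mul_pos hb1pos hb1pos)) _)
  have hCupos : 0 < Cu :=
    mul_pos (mul_pos (Real.rpow_pos_of_pos hθ0 _) (Real.rpow_pos_of_pos h1θ _))
      (Real.rpow_pos_of_pos (div_pos one_pos (mul_pos hb1pos hb1pos)) _)
  clear_value cl Cu
  refine ⟨cl, max cl Cu, hclpos, le_max_left _ _, ?_⟩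
  rintro q ⟨hq1, hq2⟩
  have hq1' : 1 < q := lt_of_le_of_lt (le_max_left _ _) hq1
  have hqhalf : b1 / 2 < q := lt_of_le_of_lt (le_max_right _ _) hq1
  have hq0 : 0 < q := lt_trans one_pos hq1'
  set δ : ℝ := 1 / q - 1 / b1 with hδdef
  have hδpos : 0 < δ := by
    have := one_div_lt_one_div_of_lt hq0 hq2
    rw [hδdef]; linarith
  have hb1q : 0 < b1 - q := sub_pos.mpr hq2
  have hδeq : δ = (b1 - q) / (q * b1) := by
    rw [hδdef]; field_simp
  have hδα : δ = 1 / q - 1 / b + α := by rw [hδdef, hb1inv]; ring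
  have hδlt1 : δ < 1 := by
    have h1 : 1 / q < 1 := by rw [div_lt_one hq0]; exact hq1'
    have h2 : 0 < 1 / b1 := by positivity
    rw [hδdef]; linarith
  clear_value δ
  have hδle : δ ≤ (b1 - q) * (2 / (b1 * b1)) := by
    have h2 : (b1 - q) * (2 / (b1 * b1)) = 2 * (b1 - q) / (b1 * b1) := by ring
    rw [hδeq, h2, div_le_div_iff₀ (by positivity) (by positivity)]
    linarith [mul_nonneg (mul_nonneg hb1q.le hb1pos.le) (by linarith : (0:ℝ) ≤ 2 * q - b1)]
  have hδge : (b1 - q) * (1 / (b1 * b1)) ≤ δ := by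
    have h2 : (b1 - q) * (1 / (b1 * b1)) = (b1 - q) / (b1 * b1) := by ring
    rw [hδeq, h2, div_le_div_iff₀ (by positivity) (by positivity)]
    linarith [mul_nonneg (mul_nonneg hb1q.le hb1pos.le) hb1q.le]
  have hδe : δ ^ e = δ ^ (-β) / δ ^ (α₂ + 1) := by
    rw [heeq, Real.rpow_sub hδpos]
  -- lower bound on every element of the set
  have key_lower : ∀ r ∈ {r : ℝ | ∃ p ∈ Ioo 1 b, 1/p - 1/q < α ∧
      r = (b - p) ^ (-β) / (α - (1/p - 1/q)) ^ (α₂ + 1)}, cl * (b1 - q) ^ e ≤ r := by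
    rintro r ⟨p, ⟨hp1, hpb⟩, hpc, rfl⟩
    have hp0 : 0 < p := lt_trans one_pos hp1
    have hA : 0 < α - (1/p - 1/q) := by linarith
    have hpb' : 1 / b < 1 / p := one_div_lt_one_div_of_lt hp0 hpb
    have hA2 : α - (1/p - 1/q) ≤ δ := by rw [hδα]; linarith
    have htδ : 1/p - 1/b < δ := by rw [hδα]; linarith
    have hx0 : 0 < 1/p - 1/b := by linarith
    have hbp : 0 < b - p := sub_pos.mpr hpb
    have hbpeq : b - p = b * p * (1/p - 1/b) := by
      field_simp
    have hbpl : b - p ≤ b * b * δ := by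
      rw [hbpeq]
      calc b * p * (1/p - 1/b) ≤ b * b * (1/p - 1/b) := by
            linarith [mul_nonneg (mul_nonneg hb0.le (by linarith : (0:ℝ) ≤ b - p)) hx0.le]
        _ ≤ b * b * δ := by
            linarith [mul_nonneg (mul_pos hb0 hb0).le
              (by linarith : (0:ℝ) ≤ δ - (1/p - 1/b))]
    have h1 : (b * b * δ) ^ (-β) ≤ (b - p) ^ (-β) :=
      Real.rpow_le_rpow_of_nonpos hbp hbpl (by linarith)
    have h2 : (α - (1/p - 1/q)) ^ (α₂ + 1) ≤ δ ^ (α₂ + 1) :=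
      Real.rpow_le_rpow hA.le hA2 (by linarith)
    have h2pos : 0 < (α - (1/p - 1/q)) ^ (α₂ + 1) := Real.rpow_pos_of_pos hA _
    have hfl : (b * b * δ) ^ (-β) / δ ^ (α₂ + 1)
        ≤ (b - p) ^ (-β) / (α - (1/p - 1/q)) ^ (α₂ + 1) :=
      div_le_div₀ (Real.rpow_nonneg hbp.le _) h1 h2pos h2
    refine le_trans ?_ hfl
    have hsplit : (b * b * δ) ^ (-β) = (b * b) ^ (-β) * δ ^ (-β) :=
      Real.mul_rpow (by positivity) hδpos.le
    have hδe2 : ((b1 - q) * (2 / (b1 * b1))) ^ e ≤ δ ^ e :=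
      Real.rpow_le_rpow_of_nonpos hδpos hδle he0.le
    have hδe3 : ((b1 - q) * (2 / (b1 * b1))) ^ e
        = (b1 - q) ^ e * (2 / (b1 * b1)) ^ e :=
      Real.mul_rpow hb1q.le (by positivity)
    have hstep : cl * (b1 - q) ^ e ≤ (b * b) ^ (-β) * δ ^ e := by
      rw [hcl]
      calc (b * b) ^ (-β) * (2 / (b1 * b1)) ^ e * (b1 - q) ^ e
          = (b * b) ^ (-β) * ((b1 - q) * (2 / (b1 * b1))) ^ e := by rw [hδe3]; ring
        _ ≤ (b * b) ^ (-β) * δ ^ e :=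
            mul_le_mul_of_nonneg_left hδe2 (Real.rpow_nonneg (by positivity) _)
    calc cl * (b1 - q) ^ e ≤ (b * b) ^ (-β) * δ ^ e := hstep
      _ = (b * b * δ) ^ (-β) / δ ^ (α₂ + 1) := by
          rw [hsplit, hδe, mul_div_assoc]
  -- the witness point p0
  have hx : 0 < 1 / b + θ * δ := by positivity
  set p0 : ℝ := 1 / (1 / b + θ * δ) with hp0def
  have hp0pos : 0 < p0 := by rw [hp0def]; positivity
  have hinvp0 : 1 / p0 = 1 / b + θ * δ := by
    rw [hp0def, one_div_one_div]
  have hbp0 : b - p0 = b * p0 * (θ * δ) := by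
    rw [hp0def]
    field_simp
    ring
  clear_value p0
  have hsum : 1 / b + θ * δ < 1 := by
    have h1 : θ * δ < θ := by linarith [mul_pos hθ0 (by linarith : (0:ℝ) < 1 - δ)]
    linarith
  have hp0gt1 : 1 < p0 := by
    have h1 : 1 / p0 < 1 := by rw [hinvp0]; exact hsum
    exact (div_lt_one hp0pos).mp h1
  have hp0ltb : p0 < b := by
    have h1 : 1 / b < 1 / p0 := by
      rw [hinvp0]; linarith [mul_pos hθ0 hδpos]
    exact lt_of_one_div_lt_one_div hb0 h1
  have hAeq : α - (1/p0 - 1/q) = (1 - θ) * δ := by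
    rw [hinvp0, hδα]; ring
  have hp0c : 1/p0 - 1/q < α := by
    linarith [mul_pos h1θ hδpos]
  have hbp0ge : θ * δ ≤ b - p0 := by
    have h1 : 1 < b * p0 := by
      linarith [mul_pos (sub_pos.mpr hb) (sub_pos.mpr hp0gt1)]
    rw [hbp0]
    linarith [mul_nonneg (by linarith : (0:ℝ) ≤ b * p0 - 1) (mul_pos hθ0 hδpos).le]
  have hmem : (b - p0) ^ (-β) / (α - (1/p0 - 1/q)) ^ (α₂ + 1) ∈
      {r : ℝ | ∃ p ∈ Ioo 1 b, 1/p - 1/q < α ∧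
        r = (b - p) ^ (-β) / (α - (1/p - 1/q)) ^ (α₂ + 1)} :=
    ⟨p0, ⟨hp0gt1, hp0ltb⟩, hp0c, rfl⟩
  -- upper bound on the witness value
  have hup : (b - p0) ^ (-β) / (α - (1/p0 - 1/q)) ^ (α₂ + 1)
      ≤ max cl Cu * (b1 - q) ^ e := by
    have hθδ : 0 < θ * δ := mul_pos hθ0 hδpos
    have h1 : (b - p0) ^ (-β) ≤ (θ * δ) ^ (-β) :=
      Real.rpow_le_rpow_of_nonpos hθδ hbp0ge (by linarith)
    have hApos : 0 < ((1 - θ) * δ) ^ (α₂ + 1) :=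
      Real.rpow_pos_of_pos (mul_pos h1θ hδpos) _
    have h2 : (b - p0) ^ (-β) / (α - (1/p0 - 1/q)) ^ (α₂ + 1)
        ≤ (θ * δ) ^ (-β) / ((1 - θ) * δ) ^ (α₂ + 1) := by
      rw [hAeq]
      exact (div_le_div_iff_of_pos_right hApos).mpr h1
    have h3 : (θ * δ) ^ (-β) / ((1 - θ) * δ) ^ (α₂ + 1)
        = θ ^ (-β) * (1 - θ) ^ (-(α₂ + 1)) * δ ^ e := by
      rw [Real.mul_rpow hθ0.le hδpos.le, Real.mul_rpow h1θ.le hδpos.le,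
        Real.rpow_neg h1θ.le, hδe]
      have hd2 : (0:ℝ) < (1 - θ) ^ (α₂ + 1) := Real.rpow_pos_of_pos h1θ _
      have hd3 : (0:ℝ) < δ ^ (α₂ + 1) := Real.rpow_pos_of_pos hδpos _
      field_simp
      try ring
    have h4 : δ ^ e ≤ (b1 - q) ^ e * (1 / (b1 * b1)) ^ e := by
      have hh := Real.rpow_le_rpow_of_nonpos (by positivity :
          (0:ℝ) < (b1 - q) * (1 / (b1 * b1))) hδge he0.le
      calc δ ^ e ≤ ((b1 - q) * (1 / (b1 * b1))) ^ e := hh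
        _ = (b1 - q) ^ e * (1 / (b1 * b1)) ^ e :=
            Real.mul_rpow hb1q.le (by positivity)
    have h5 : θ ^ (-β) * (1 - θ) ^ (-(α₂ + 1)) * δ ^ e ≤ Cu * (b1 - q) ^ e := by
      rw [hCu]
      have hpos : 0 < θ ^ (-β) * (1 - θ) ^ (-(α₂ + 1)) :=
        mul_pos (Real.rpow_pos_of_pos hθ0 _) (Real.rpow_pos_of_pos h1θ _)
      calc θ ^ (-β) * (1 - θ) ^ (-(α₂ + 1)) * δ ^ e
          ≤ θ ^ (-β) * (1 - θ) ^ (-(α₂ + 1)) * ((b1 - q) ^ e * (1 / (b1 * b1)) ^ e) :=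
            mul_le_mul_of_nonneg_left h4 hpos.le
        _ = θ ^ (-β) * (1 - θ) ^ (-(α₂ + 1)) * (1 / (b1 * b1)) ^ e * (b1 - q) ^ e := by
            ring
    have h6 : Cu * (b1 - q) ^ e ≤ max cl Cu * (b1 - q) ^ e :=
      mul_le_mul_of_nonneg_right (le_max_right _ _) (Real.rpow_nonneg hb1q.le _)
    calc (b - p0) ^ (-β) / (α - (1/p0 - 1/q)) ^ (α₂ + 1)
        ≤ (θ * δ) ^ (-β) / ((1 - θ) * δ) ^ (α₂ + 1) := h2
      _ = θ ^ (-β) * (1 - θ) ^ (-(α₂ + 1)) * δ ^ e := h3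
      _ ≤ Cu * (b1 - q) ^ e := h5
      _ ≤ max cl Cu * (b1 - q) ^ e := h6
  have hbdd : BddBelow {r : ℝ | ∃ p ∈ Ioo 1 b, 1/p - 1/q < α ∧
      r = (b - p) ^ (-β) / (α - (1/p - 1/q)) ^ (α₂ + 1)} :=
    ⟨cl * (b1 - q) ^ e, fun r hr => key_lower r hr⟩
  exact ⟨le_csInf ⟨_, hmem⟩ key_lower, le_trans (csInf_le hbdd hmem) hup⟩
end

section
/- Let b ∈ (1,∞), β ≥ 0, α = 1/b, and α₂ > -1. Then there exists a constant C = C(α,α₂,β) such that for all q ∈ (1,∞): inf_{p ∈ (1,b), 1/p - 1/q < α} (b-p)^{-β}·[α - (1/p - 1/q)]^{-(α₂+1)} ≤ C·q^{β + α₂ + 1}. -/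
/-!
Take `1/p = 1/b + c/q` for a fixed `c ∈ (0, 1 - 1/b)`. Then `1/b - (1/p - 1/q) = (1 - c)/q`
exactly, and `b - p ≥ b c / q`, so the weight at this `p` is at most
`(b c)^{-β} (1 - c)^{-(α₂+1)} q^{β+α₂+1}`.
-/

open Real Set

def weightSet (b β α₂ q : ℝ) : Set ℝ :=
  {r : ℝ | ∃ p ∈ Ioo 1 b, 1/p - 1/q < 1/b ∧
    r = (b - p) ^ (-β) / (1/b - (1/p - 1/q)) ^ (α₂ + 1)}

lemma bddBelow_weightSet (b β α₂ q : ℝ) : BddBelow (weightSet b β α₂ q) := by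
  refine ⟨0, ?_⟩
  rintro r ⟨p, ⟨-, hpb⟩, hgap, rfl⟩
  have hbp : 0 < b - p := by linarith
  have hgap' : 0 < 1/b - (1/p - 1/q) := by linarith
  positivity

lemma mul_le_sub_inv_add {b ε : ℝ} (hb : 0 < b) (hε : 0 < ε) (h : b⁻¹ + ε ≤ 1) :
    b * ε ≤ b - (b⁻¹ + ε)⁻¹ := by
  have hden : 0 < b⁻¹ + ε := by positivity
  have heq : b - (b⁻¹ + ε)⁻¹ = b * ε / (b⁻¹ + ε) := by field_simp; ring
  rw [heq, le_div_iff₀ hden]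
  nlinarith [mul_pos hb hε]

lemma div_rpow_neg_div_div_rpow {x y q : ℝ} (s t : ℝ) (hx : 0 < x) (hy : 0 < y) (hq : 0 < q) :
    (x / q) ^ (-s) / (y / q) ^ t = x ^ (-s) / y ^ t * q ^ (s + t) := by
  rw [div_rpow hx.le hq.le, div_rpow hy.le hq.le, rpow_neg hq.le, rpow_add hq]
  field_simp

lemma sInf_weightSet_le {b β c q : ℝ} (α₂ : ℝ) (hb : 1 < b) (hβ : 0 ≤ β) (hc : 0 < c)
    (hcb : c < 1 - 1/b) (hq : 1 < q) :
    sInf (weightSet b β α₂ q) ≤ (b * c) ^ (-β) / (1 - c) ^ (α₂ + 1) * q ^ (β + α₂ + 1) := by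
  have hb0 : 0 < b := by linarith
  have hq0 : 0 < q := by linarith
  have hcq : c / q < c := div_lt_self hc hq
  have hbinv : 0 < 1/b := by positivity
  have hc1 : 0 < 1 - c := by linarith
  set p := (1/b + c/q)⁻¹ with hp
  have hinv_p : 1/p = 1/b + c/q := by rw [hp, one_div, inv_inv]
  have hp1 : 1 < p := one_lt_inv_iff₀.mpr ⟨by positivity, by linarith⟩
  have hbp : b * c / q ≤ b - p := by
    rw [mul_div_assoc, hp, one_div]
    exact mul_le_sub_inv_add hb0 (by positivity) (by rw [← one_div]; linarith)
  have hgap : 1/b - (1/p - 1/q) = (1 - c)/q := by rw [hinv_p]; ring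
  have hmem : (b - p) ^ (-β) / ((1 - c)/q) ^ (α₂ + 1) ∈ weightSet b β α₂ q :=
    ⟨p, ⟨hp1, by linarith [div_pos (mul_pos hb0 hc) hq0]⟩,
      by linarith [div_pos hc1 hq0], by rw [hgap]⟩
  calc sInf (weightSet b β α₂ q) ≤ (b - p) ^ (-β) / ((1 - c)/q) ^ (α₂ + 1) :=
        csInf_le (bddBelow_weightSet b β α₂ q) hmem
    _ ≤ (b * c / q) ^ (-β) / ((1 - c)/q) ^ (α₂ + 1) :=
        div_le_div_of_nonneg_right
          (rpow_le_rpow_of_nonpos (by positivity) hbp (neg_nonpos.mpr hβ))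
          (rpow_pos_of_pos (div_pos hc1 hq0) _).le
    _ = (b * c) ^ (-β) / (1 - c) ^ (α₂ + 1) * q ^ (β + (α₂ + 1)) :=
        div_rpow_neg_div_div_rpow β (α₂ + 1) (by positivity) hc1 hq0
    _ = (b * c) ^ (-β) / (1 - c) ^ (α₂ + 1) * q ^ (β + α₂ + 1) := by rw [add_assoc]

theorem inf_weight_bound_alpha_eq_inv_b_general (b β α₂ : ℝ) (hb : 1 < b) (hβ : 0 ≤ β) :
    ∃ C : ℝ, 0 < C ∧ ∀ q : ℝ, 1 < q →
      sInf {r : ℝ | ∃ p ∈ Ioo 1 b, 1/p - 1/q < 1/b ∧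
          r = (b - p) ^ (-β) / (1/b - (1/p - 1/q)) ^ (α₂ + 1)}
        ≤ C * q ^ (β + α₂ + 1) := by
  set c := (1 - 1/b) / 2 with hc_def
  have hbinv : 1/b < 1 := (div_lt_one (by linarith)).mpr hb
  have hc : 0 < c := by linarith
  have hcb : c < 1 - 1/b := by linarith
  have hb0 : 0 < b := by linarith
  have hc1 : 0 < 1 - c := by linarith [one_div_pos.mpr hb0]
  exact ⟨(b * c) ^ (-β) / (1 - c) ^ (α₂ + 1), by positivity,
    fun q hq => sInf_weightSet_le α₂ hb hβ hc hcb hq⟩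

/-- For `b ∈ (1,∞)`, `β ≥ 0`, `α = 1/b` and `α₂ > -1`, the infimum over `p ∈ (1,b)` with
`1/p - 1/q < α` of `(b-p)^{-β}·(α-(1/p-1/q))^{-(α₂+1)}` is at most `C·q^{β+α₂+1}`
for all `q ∈ (1,∞)`. -/
theorem inf_weight_bound_alpha_eq_inv_b (b β α₂ : ℝ) (hb : 1 < b) (hβ : 0 ≤ β)
    (hα₂ : -1 < α₂) :
    ∃ C : ℝ, 0 < C ∧ ∀ q : ℝ, 1 < q →
      sInf {r : ℝ | ∃ p ∈ Ioo 1 b, 1/p - 1/q < 1/b ∧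
          r = (b - p) ^ (-β) / (1/b - (1/p - 1/q)) ^ (α₂ + 1)}
        ≤ C * q ^ (β + α₂ + 1) :=
  inf_weight_bound_alpha_eq_inv_b_general b β α₂ hb hβ
end
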